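/- Let n : ℕ, let A : Matrix (Fin n) (Fin n) ℝ be symmetric (Aᵀ = A), let L = 1 − A, let X : EuclideanSpace ℝ (Fin n), and let c : ℝ with c > −1. Set b = 1/(2*(1+c)) and α = 2*b = 1/(1+c). Define J : EuclideanSpace ℝ (Fin n) → ℝ by J(Y) = ‖Y − X‖² + c * ⟪Y, L.mulVec Y⟫. Then for every Y : EuclideanSpace ℝ (Fin n), Y − b • gradient J Y = α • X + (1 − α) • A.mulVec Y. Moreover, if c ≥ 0 then 0 < α and α ≤ 1. -/

import Mathlib

/-!
The objective is the sum of the squared distance to `X`, with gradient `2 (Y - X)`, and `c` times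
the quadratic form of the self-adjoint operator `1 - A`, with gradient `2 (1 - A) Y`. A gradient
step of size `b = 1 / (2 (1 + c))` therefore gives
`Y - b ∇J(Y) = (1 - 2b(1 + c)) Y + 2b X + 2bc A Y = α X + (1 - α) A Y`, since `α = 2b = 1 / (1 + c)`
and `2bc = 1 - α`.
-/

section SignalDenoising

variable {E : Type*} [NormedAddCommGroup E] [InnerProductSpace ℝ E] [CompleteSpace E]

theorem HasGradientAt.add {f g : E → ℝ} {f' g' x : E} (hf : HasGradientAt f f' x)
    (hg : HasGradientAt g g' x) : HasGradientAt (fun z => f z + g z) (f' + g') x := by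
  rw [hasGradientAt_iff_hasFDerivAt] at *
  rw [map_add]
  exact hf.add hg

theorem HasGradientAt.const_mul {f : E → ℝ} {f' x : E} (c : ℝ) (hf : HasGradientAt f f' x) :
    HasGradientAt (fun z => c * f z) (c • f') x := by
  rw [hasGradientAt_iff_hasFDerivAt] at *
  rw [map_smul]
  exact hf.const_mul c

theorem hasGradientAt_norm_sub_sq (a y : E) :
    HasGradientAt (fun z => ‖z - a‖ ^ 2) ((2 : ℝ) • (y - a)) y := by
  rw [hasGradientAt_iff_hasFDerivAt]
  refine ((hasFDerivAt_id y).sub_const a).norm_sq.congr_fderiv ?_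
  ext v
  simp

theorem IsSelfAdjoint.hasGradientAt_inner_self_apply {T : E →L[ℝ] E} (hT : IsSelfAdjoint T)
    (y : E) : HasGradientAt (fun z => inner ℝ z (T z)) ((2 : ℝ) • T y) y := by
  rw [hasGradientAt_iff_hasFDerivAt]
  refine ((hasFDerivAt_id y).inner ℝ T.hasFDerivAt).congr_fderiv ?_
  ext v
  have hsymm : inner ℝ (T y) v = inner ℝ y (T v) := hT.isSymmetric y v
  simp only [id_eq, ContinuousLinearMap.comp_apply, ContinuousLinearMap.prod_apply,
    ContinuousLinearMap.id_apply, fderivInnerCLM_apply, map_smul, smul_apply,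
    InnerProductSpace.toDual_apply_apply, smul_eq_mul]
  rw [← hsymm, real_inner_comm v]
  ring

def signalDenoisingObjective (A : E →L[ℝ] E) (c : ℝ) (X : E) (Y : E) : ℝ :=
  ‖Y - X‖ ^ 2 + c * inner ℝ Y ((1 - A) Y)

theorem hasGradientAt_signalDenoisingObjective {A : E →L[ℝ] E} (hA : IsSelfAdjoint A) (c : ℝ)
    (X Y : E) :
    HasGradientAt (signalDenoisingObjective A c X) ((2 : ℝ) • (Y - X) + c • (2 : ℝ) • (1 - A) Y)
      Y :=
  (hasGradientAt_norm_sub_sq X Y).add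
    (((IsSelfAdjoint.one _).sub hA).hasGradientAt_inner_self_apply Y |>.const_mul c)

theorem sub_smul_gradient_signalDenoisingObjective {A : E →L[ℝ] E} (hA : IsSelfAdjoint A)
    {c : ℝ} (hc : 1 + c ≠ 0) (X Y : E) :
    Y - (1 / (2 * (1 + c))) • gradient (signalDenoisingObjective A c X) Y
      = (1 / (1 + c)) • X + (1 - 1 / (1 + c)) • A Y := by
  rw [(hasGradientAt_signalDenoisingObjective hA c X Y).gradient,
    sub_apply, one_apply_eq_self]
  match_scalars <;> field_simp <;> ring

end SignalDenoising

open Matrix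

theorem thgin_pagerank_update
    (n : ℕ) (A : Matrix (Fin n) (Fin n) ℝ) (hA : Aᵀ = A)
    (L : Matrix (Fin n) (Fin n) ℝ) (hL : L = 1 - A)
    (X : EuclideanSpace ℝ (Fin n)) (c : ℝ) (hc : c > -1)
    (b α : ℝ) (hb : b = 1 / (2 * (1 + c))) (hα : α = 2 * b)
    (J : EuclideanSpace ℝ (Fin n) → ℝ)
    (hJ : J = fun Y : EuclideanSpace ℝ (Fin n) =>
        ‖Y - X‖ ^ 2 +
          c * (inner ℝ Y ((EuclideanSpace.equiv (Fin n) ℝ).symm (L.mulVec Y)) : ℝ)) :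
    (∀ Y : EuclideanSpace ℝ (Fin n),
        Y - b • gradient J Y
          = α • X + (1 - α) • (EuclideanSpace.equiv (Fin n) ℝ).symm (A.mulVec Y)) ∧
      (c ≥ 0 → 0 < α ∧ α ≤ 1) := by
  set T := toEuclideanCLM (n := Fin n) (𝕜 := ℝ) A
  have hT : IsSelfAdjoint T := by
    refine (isHermitian_iff_isSelfAdjoint.mp ?_).map _
    rwa [IsHermitian, conjTranspose_eq_transpose_of_trivial]
  have hJT : J = signalDenoisingObjective T c X := by
    have hLT : toEuclideanCLM (n := Fin n) (𝕜 := ℝ) L = 1 - T := by rw [hL, map_sub, map_one]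
    ext1 Y
    rw [hJ, signalDenoisingObjective, ← hLT]
    rfl
  have hαc : α = 1 / (1 + c) := by rw [hα, hb]; field_simp
  refine ⟨fun Y => ?_, fun hc0 => ?_⟩
  · rw [hJT, hb, hαc]
    exact sub_smul_gradient_signalDenoisingObjective hT (by linarith) X Y
  · rw [hαc, div_le_one (by linarith)]
    exact ⟨by positivity, by linarith⟩
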